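/- Let X be a continuum and F : X → 2^X an upper semicontinuous set-valued function such that F(x) is connected for every x ∈ X. Then for each x ∈ X, the orbit set O_F(x) is a continuum (compact and connected) in X^ℕ. -/

import Mathlib

/-!
Let `S n = partialOrbitSet F x n` be the set of sequences starting at `x` that obey
`u (i+1) ∈ F (u i)` for `i < n`. The upper semicontinuity of the closed-valued `F` makes its
graph closed, so every `S n` is closed, and `S (n+1)` is the image of `{(u, y) | u ∈ S n, y ∈ F (u n)}` under writing `y` into
coordinate `n+1`. The projection of that set onto `S n` is a closed map (its second factor is
compact) with connected fibres `F (u n)`, hence a quotient map, so connectedness of `S n`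
passes to `S (n+1)`. The orbit set is the nested intersection of the compact connected `S n`,
hence a continuum.
-/

open Set Topology Filter

variable {X : Type*}

/-- Iterates of a set-valued map: `IterF F 0 x = {x}`,
`IterF F (n+1) x = ⋃ y ∈ IterF F n x, F y`; so `IterF F k` is `F^k` for `k ≥ 1`. -/
def IterF (F : X → Set X) : ℕ → X → Set X
  | 0 => fun x => {x}
  | n + 1 => fun x => ⋃ y ∈ IterF F n x, F y

/-- The orbit set of `z` under `F` (sequences indexed from `0`). -/
def OrbitSet (F : X → Set X) (z : X) : Set (ℕ → X) :=
  {u | u 0 = z ∧ ∀ n, u (n + 1) ∈ F (u n)}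

/-- Upper semicontinuity of a set-valued function. -/
def USC [TopologicalSpace X] (F : X → Set X) : Prop :=
  ∀ x, ∀ V : Set X, IsOpen V → F x ⊆ V →
    ∃ U : Set X, IsOpen U ∧ x ∈ U ∧ ∀ y ∈ U, F y ⊆ V

/-- Lower semicontinuity of a set-valued function. -/
def LSC [TopologicalSpace X] (F : X → Set X) : Prop :=
  ∀ x, ∀ V : Set X, IsOpen V → (F x ∩ V).Nonempty →
    ∃ U : Set X, IsOpen U ∧ x ∈ U ∧ ∀ y ∈ U, (F y ∩ V).Nonempty

theorem isPreconnected_iInter_of_directed {α ι : Type*} [TopologicalSpace α] [T2Space α]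
    [Nonempty ι] {K : ι → Set α} (hdir : Directed (· ⊇ ·) K) (hcpt : ∀ i, IsCompact (K i))
    (hconn : ∀ i, IsPreconnected (K i)) : IsPreconnected (⋂ i, K i) := by
  have hcl : IsClosed (⋂ i, K i) := isClosed_iInter fun i => (hcpt i).isClosed
  rw [isPreconnected_iff_subset_of_fully_disjoint_closed hcl]
  intro u v hu hv huv huv_disj
  have hLcpt : IsCompact (⋂ i, K i) :=
    (hcpt (Classical.arbitrary ι)).of_isClosed_subset hcl (iInter_subset K _)
  obtain ⟨U, V, hU, hV, huU, hvV, hUV⟩ := SeparatedNhds.of_isCompact_isCompact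
    (hLcpt.inter_right hu) (hLcpt.inter_right hv)
    (huv_disj.mono inter_subset_right inter_subset_right)
  have hLUV : ⋂ i, K i ⊆ U ∪ V := fun x hx =>
    (huv hx).imp (fun h => huU ⟨hx, h⟩) (fun h => hvV ⟨hx, h⟩)
  -- compactness pushes the separation of the intersection down to a single `K i`
  obtain ⟨i, hi⟩ := exists_subset_nhds_of_isCompact hdir hcpt
    fun x hx => (hU.union hV).mem_nhds (hLUV hx)
  rcases (hconn i).subset_or_subset hU hV hUV hi with hKU | hKV
  · refine Or.inl fun x hx => (huv hx).resolve_right fun hxv => ?_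
    exact hUV.ne_of_mem (hKU (iInter_subset K i hx)) (hvV ⟨hx, hxv⟩) rfl
  · refine Or.inr fun x hx => (huv hx).resolve_left fun hxu => ?_
    exact hUV.ne_of_mem (huU ⟨hx, hxu⟩) (hKV (iInter_subset K i hx)) rfl

theorem isConnected_iInter_of_directed {α ι : Type*} [TopologicalSpace α] [T2Space α]
    [Nonempty ι] {K : ι → Set α} (hdir : Directed (· ⊇ ·) K) (hcpt : ∀ i, IsCompact (K i))
    (hconn : ∀ i, IsConnected (K i)) : IsConnected (⋂ i, K i) :=
  ⟨IsCompact.nonempty_iInter_of_directed_nonempty_isCompact_isClosed K hdir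
      (fun i => (hconn i).nonempty) hcpt fun i => (hcpt i).isClosed,
    isPreconnected_iInter_of_directed hdir hcpt fun i => (hconn i).isPreconnected⟩

theorem USC.isClosed_graph [TopologicalSpace X] [RegularSpace X] {F : X → Set X} (hF : USC F)
    (hcl : ∀ x, IsClosed (F x)) : IsClosed {p : X × X | p.2 ∈ F p.1} := by
  refine isOpen_compl_iff.1 <| isOpen_iff_mem_nhds.2 fun ⟨a, b⟩ hab => ?_
  have hsep : Disjoint (𝓝ˢ (F a)) (𝓝 b) := disjoint_nhdsSet_nhds.2 <| by rwa [(hcl a).closure_eq]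
  obtain ⟨s, hs, t, ht, hst⟩ := Filter.disjoint_iff.1 hsep
  obtain ⟨V, hV, hFV, hVs⟩ := mem_nhdsSet_iff_exists.1 hs
  obtain ⟨U, hU, haU, hUV⟩ := hF a V hV hFV
  filter_upwards [prod_mem_nhds (hU.mem_nhds haU) ht] with ⟨a', b'⟩ ⟨ha', hb'⟩ hmem
  exact hst.ne_of_mem (hVs (hUV a' ha' hmem)) hb' rfl

theorem IsConnected.graph_restrict {α β : Type*} [TopologicalSpace α] [TopologicalSpace β]
    [CompactSpace β] {A : Set α} (hA : IsConnected A) (hAcl : IsClosed A) {G : α → Set β}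
    (hG : IsClosed {p : α × β | p.2 ∈ G p.1}) (hconn : ∀ a, IsConnected (G a)) :
    IsConnected {p : α × β | p.1 ∈ A ∧ p.2 ∈ G p.1} := by
  let f : {p : α × β | p.2 ∈ G p.1} → α := fun p => p.1.1
  have hf : IsQuotientMap f := by
    refine IsClosedMap.isQuotientMap ?_ (continuous_fst.comp continuous_subtype_val) ?_
    · exact isClosedMap_fst_of_compactSpace.comp hG.isClosedEmbedding_subtypeVal.isClosedMap
    · intro a
      obtain ⟨b, hb⟩ := (hconn a).nonempty
      exact ⟨⟨(a, b), hb⟩, rfl⟩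
  have hfib : ∀ a, IsConnected (f ⁻¹' {a}) := by
    intro a
    have himage : Subtype.val '' (f ⁻¹' {a}) = {a} ×ˢ G a := by
      ext ⟨a', b⟩
      simp only [mem_image, mem_preimage, mem_singleton_iff, mem_prod, f]
      constructor
      · rintro ⟨⟨p, hp⟩, rfl, rfl⟩
        exact ⟨rfl, hp⟩
      · rintro ⟨rfl, hb⟩
        exact ⟨⟨(a', b), hb⟩, rfl, rfl⟩
    have h := (isConnected_singleton (x := a)).prod (hconn a)
    rw [← himage] at h
    exact ⟨h.nonempty.of_image, Topology.IsInducing.subtypeVal.isPreconnected_image.1 h.2⟩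
  convert (hf.isCoinducing.isConnected_preimage_of_isClosed hfib hAcl hA).image _
    continuous_subtype_val.continuousOn using 1
  ext p
  simp [f, and_comm]

def partialOrbitSet (F : X → Set X) (x : X) (n : ℕ) : Set (ℕ → X) :=
  {u | u 0 = x ∧ ∀ i < n, u (i + 1) ∈ F (u i)}

theorem partialOrbitSet_antitone (F : X → Set X) (x : X) : Antitone (partialOrbitSet F x) :=
  fun _ _ hmn _ ⟨h0, hstep⟩ => ⟨h0, fun i hi => hstep i (hi.trans_le hmn)⟩

theorem iInter_partialOrbitSet (F : X → Set X) (x : X) :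
    ⋂ n, partialOrbitSet F x n = OrbitSet F x := by
  ext u
  simp only [mem_iInter, partialOrbitSet, OrbitSet, mem_ofPred_eq]
  constructor
  · intro h
    exact ⟨(h 0).1, fun n => (h (n + 1)).2 n n.lt_succ_self⟩
  · rintro ⟨h0, hstep⟩ n
    exact ⟨h0, fun i _ => hstep i⟩

theorem partialOrbitSet_succ (F : X → Set X) (x : X) (n : ℕ) :
    partialOrbitSet F x (n + 1) = (fun p : (ℕ → X) × X => Function.update p.1 (n + 1) p.2) ''
      {p | p.1 ∈ partialOrbitSet F x n ∧ p.2 ∈ F (p.1 n)} := by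
  ext v
  constructor
  · rintro ⟨h0, hstep⟩
    exact ⟨(v, v (n + 1)), ⟨⟨h0, fun i hi => hstep i (hi.trans n.lt_succ_self)⟩,
      hstep n n.lt_succ_self⟩, Function.update_eq_self _ _⟩
  · rintro ⟨⟨u, y⟩, ⟨⟨h0, hstep⟩, hy⟩, rfl⟩
    refine ⟨by simpa using h0, fun i hi => ?_⟩
    rcases Nat.lt_succ_iff_lt_or_eq.1 hi with hi | rfl
    · simpa [Function.update_of_ne, hi.ne, (hi.trans n.lt_succ_self).ne] using hstep i hi
    · simpa using hy

theorem isClosed_partialOrbitSet [TopologicalSpace X] [T1Space X] {F : X → Set X}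
    (hF : IsClosed {p : X × X | p.2 ∈ F p.1}) (x : X) (n : ℕ) :
    IsClosed (partialOrbitSet F x n) := by
  simp only [partialOrbitSet, ofPred_and, ofPred_forall]
  exact (isClosed_singleton.preimage (continuous_apply 0)).inter <|
    isClosed_iInter fun i => isClosed_iInter fun _ =>
      IsClosed.preimage (f := fun u : ℕ → X => (u i, u (i + 1))) (by fun_prop) hF

theorem isConnected_partialOrbitSet [TopologicalSpace X] [T1Space X] [CompactSpace X]
    [ConnectedSpace X] {F : X → Set X} (hF : IsClosed {p : X × X | p.2 ∈ F p.1})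
    (hconn : ∀ x, IsConnected (F x)) (x : X) (n : ℕ) :
    IsConnected (partialOrbitSet F x n) := by
  induction n with
  | zero =>
    have : partialOrbitSet F x 0 = range fun v => Function.update v 0 x := by
      ext u
      simp only [partialOrbitSet, mem_ofPred_eq, mem_range]
      constructor
      · rintro ⟨rfl, -⟩
        exact ⟨u, Function.update_eq_self 0 u⟩
      · rintro ⟨v, rfl⟩
        simp
    rw [this]
    exact isConnected_range (by fun_prop)
  | succ n ih =>
    rw [partialOrbitSet_succ]
    have hFn : IsClosed {p : (ℕ → X) × X | p.2 ∈ F (p.1 n)} :=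
      IsClosed.preimage (f := fun p : (ℕ → X) × X => (p.1 n, p.2)) (by fun_prop) hF
    refine (ih.graph_restrict (isClosed_partialOrbitSet hF x n) (G := fun u => F (u n)) hFn
      fun u => hconn (u n)).image _ ?_
    exact (by fun_prop : Continuous _).continuousOn

theorem stmt9_general [MetricSpace X] [CompactSpace X] [ConnectedSpace X] (F : X → Set X)
    (hcl : ∀ x, IsClosed (F x))
    (hconn : ∀ x, IsConnected (F x)) (hF : USC F) (x : X) :
    IsCompact (OrbitSet F x) ∧ IsConnected (OrbitSet F x) := by
  have hgraph := hF.isClosed_graph hcl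
  have hclosed : ∀ n, IsClosed (partialOrbitSet F x n) := isClosed_partialOrbitSet hgraph x
  rw [← iInter_partialOrbitSet]
  exact ⟨(isClosed_iInter hclosed).isCompact,
    isConnected_iInter_of_directed (partialOrbitSet_antitone F x).directed_ge
      (fun n => (hclosed n).isCompact) (isConnected_partialOrbitSet hgraph hconn x)⟩

/-- The orbit set of a point under an upper semicontinuous map with connected
values on a continuum is a continuum. -/
theorem stmt9 [MetricSpace X] [CompactSpace X] [ConnectedSpace X] (F : X → Set X)
    (hne : ∀ x, (F x).Nonempty) (hcl : ∀ x, IsClosed (F x))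
    (hconn : ∀ x, IsConnected (F x)) (hF : USC F) (x : X) :
    IsCompact (OrbitSet F x) ∧ IsConnected (OrbitSet F x) :=
  stmt9_general F hcl hconn hF x
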